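/- Let p,r ∈ (0,∞), X a Banach space, and V ∈ 𝒜_p(ℝⁿ;𝓛(X)) with constant C. Then for every cube Q ⊂ ℝⁿ and every e ∈ X one has ρ_{Ł^p(Q,V)}(e) ≤ C·ρ_{Ł^r(Q,V)}(e), where the right-hand side is interpreted in [0,∞]. -/

import Mathlib

open MeasureTheory ENNReal NNReal

noncomputable section

namespace OpWeight

variable {n : ℕ} {X : Type*} [NormedAddCommGroup X] [NormedSpace ℝ X]

/-- The axis-parallel cube in `ℝⁿ` with lower corner `c` and side length `l`. -/
def cube (c : Fin n → ℝ) (l : ℝ) : Set (Fin n → ℝ) :=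
  {y | ∀ i, y i ∈ Set.Ico (c i) (c i + l)}

/-- `ρ_{Ł^u(Q,V)}(e) := (⨍_Q ‖V x e‖ ^ u dx) ^ (1/u)`, valued in `[0,∞]`. -/
def rho (V : (Fin n → ℝ) → X →L[ℝ] X) (Q : Set (Fin n → ℝ)) (u : ℝ) (e : X) : ℝ≥0∞ :=
  (⨍⁻ x in Q, (‖V x e‖₊ : ℝ≥0∞) ^ u ∂volume) ^ (1 / u)

/-- `ρ_{Ł^u(Q,V^{-*})}(e') := (⨍_Q ‖e' ∘ (V x)⁻¹‖ ^ u dx) ^ (1/u)`, where `W = V⁻¹`. -/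
def rhoD (W : (Fin n → ℝ) → X →L[ℝ] X) (Q : Set (Fin n → ℝ)) (u : ℝ)
    (e' : X →L[ℝ] ℝ) : ℝ≥0∞ :=
  (⨍⁻ x in Q, (‖e'.comp (W x)‖₊ : ℝ≥0∞) ^ u ∂volume) ^ (1 / u)

/-- The dual norm `ρ*(e') := sup_{e ≠ 0} |⟨e', e⟩| / ρ(e)` on `X*` of a quasi-norm on `X`. -/
def dualNorm (ρ : X → ℝ≥0∞) (e' : X →L[ℝ] ℝ) : ℝ≥0∞ :=
  ⨆ (e : X) (_ : e ≠ 0), (‖e' e‖₊ : ℝ≥0∞) / ρ e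

/-- The dual norm of a quasi-norm on `X*`, restricted to `X`. -/
def dualNorm' (ρ : (X →L[ℝ] ℝ) → ℝ≥0∞) (e : X) : ℝ≥0∞ :=
  ⨆ (e' : X →L[ℝ] ℝ) (_ : e' ≠ 0), (‖e' e‖₊ : ℝ≥0∞) / ρ e'

/-- `V` is an operator-valued weight on `ℝⁿ`, with a.e. inverse `W`:
`x ↦ V x e` is strongly measurable for every `e`, `V x` is invertible at a.e. `x`
(with inverse `W x`), and `x ↦ W x e = (V x)⁻¹ e` is a.e. strongly measurable for
every `e`. -/
structure IsWeight (V W : (Fin n → ℝ) → X →L[ℝ] X) : Prop where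
  meas : ∀ e : X, StronglyMeasurable fun x => V x e
  inv : ∀ᵐ x ∂(volume : Measure (Fin n → ℝ)),
    (V x).comp (W x) = ContinuousLinearMap.id ℝ X ∧
      (W x).comp (V x) = ContinuousLinearMap.id ℝ X
  measInv : ∀ e : X, AEStronglyMeasurable (fun x => W x e) (volume : Measure (Fin n → ℝ))

/-- `V` is a `p`-weight: `ρ_{Ł^p(Q,V)}(e)` is finite for every cube `Q` and `e ∈ X`. -/
def IsPWeight (V : (Fin n → ℝ) → X →L[ℝ] X) (p : ℝ) : Prop :=
  ∀ (c : Fin n → ℝ) (l : ℝ), 0 < l → ∀ e : X, rho V (cube c l) p e ≠ ⊤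

/-- `V^{-*}` is a `q`-weight (with `W = V⁻¹`). -/
def IsPWeightDual (W : (Fin n → ℝ) → X →L[ℝ] X) (q : ℝ) : Prop :=
  ∀ (c : Fin n → ℝ) (l : ℝ), 0 < l → ∀ e' : X →L[ℝ] ℝ, rhoD W (cube c l) q e' ≠ ⊤

/-- The conjugate exponent `p' = p / (p - 1)`. -/
def conjExp (p : ℝ) : ℝ := p / (p - 1)

/-- The operator-valued Muckenhoupt condition `V ∈ 𝒜_p` with constant `C₀`, where
`W = V⁻¹`.  For `p > 1` it reads `ρ_{Ł^{p'}(Q,V^{-*})}(e') ≤ C₀ ρ*_{Ł^p(Q,V)}(e')`,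
and for `p ≤ 1` it reads `ρ_{Ł^p(Q,V)}((V y)⁻¹ e) ≤ C₀ ‖e‖` for a.e. `y ∈ Q`. -/
def IsAp (p : ℝ) (V W : (Fin n → ℝ) → X →L[ℝ] X) (C₀ : ℝ≥0) : Prop :=
  IsWeight V W ∧ IsPWeight V p ∧
    (1 < p → IsPWeightDual W (conjExp p) ∧
      ∀ (c : Fin n → ℝ) (l : ℝ), 0 < l → ∀ e' : X →L[ℝ] ℝ,
        rhoD W (cube c l) (conjExp p) e' ≤
          (C₀ : ℝ≥0∞) * dualNorm (rho V (cube c l) p) e') ∧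
    (p ≤ 1 → ∀ (c : Fin n → ℝ) (l : ℝ), 0 < l → ∀ e : X,
      ∀ᵐ y ∂((volume : Measure (Fin n → ℝ)).restrict (cube c l)),
        rho V (cube c l) p (W y e) ≤ (C₀ : ℝ≥0∞) * (‖e‖₊ : ℝ≥0∞))

section Aux

open Filter Topology

lemma cube_eq (c : Fin n → ℝ) (l : ℝ) :
    cube c l = Set.univ.pi fun i => Set.Ico (c i) (c i + l) := by
  ext y; simp [cube, Set.mem_univ_pi]

lemma volume_cube (c : Fin n → ℝ) (l : ℝ) :
    volume (cube c l) = ENNReal.ofReal l ^ n := by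
  rw [cube_eq, volume_pi_pi]
  simp [Real.volume_Ico]

lemma volume_cube_ne_zero (c : Fin n → ℝ) {l : ℝ} (hl : 0 < l) :
    volume (cube c l) ≠ 0 := by
  rw [volume_cube]
  exact pow_ne_zero _ (by simp [hl, ENNReal.ofReal_eq_zero, not_le])

lemma volume_cube_ne_top (c : Fin n → ℝ) (l : ℝ) :
    volume (cube c l) ≠ ⊤ := by
  rw [volume_cube]
  exact ENNReal.pow_ne_top ENNReal.ofReal_ne_top

/-- Sequential Fatou lemma for the integrands appearing in `rho`. -/
lemma fatou_aux (V : (Fin n → ℝ) → X →L[ℝ] X)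
    (hV : ∀ e : X, StronglyMeasurable fun x => V x e)
    (μ : Measure (Fin n → ℝ)) (u : ℝ) {f : X} {g : ℕ → X}
    (hg : Tendsto g atTop (𝓝 f)) :
    ∫⁻ x, (‖V x f‖₊ : ℝ≥0∞) ^ u ∂μ ≤
      liminf (fun k => ∫⁻ x, (‖V x (g k)‖₊ : ℝ≥0∞) ^ u ∂μ) atTop := by
  have h1 : ∀ x, Tendsto (fun k => (‖V x (g k)‖₊ : ℝ≥0∞) ^ u) atTop
      (𝓝 ((‖V x f‖₊ : ℝ≥0∞) ^ u)) := by
    intro x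
    have h2 : Tendsto (fun k => V x (g k)) atTop (𝓝 (V x f)) :=
      ((V x).continuous.tendsto f).comp hg
    exact (ENNReal.continuous_rpow_const.tendsto _).comp
      (((ENNReal.continuous_coe.comp continuous_nnnorm).tendsto _).comp h2)
  calc ∫⁻ x, (‖V x f‖₊ : ℝ≥0∞) ^ u ∂μ
      = ∫⁻ x, liminf (fun k => (‖V x (g k)‖₊ : ℝ≥0∞) ^ u) atTop ∂μ :=
        lintegral_congr fun x => ((h1 x).liminf_eq).symm
    _ ≤ _ := lintegral_liminf_le fun k =>
        ((hV (g k)).nnnorm.measurable.coe_nnreal_ennreal).pow_const u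

end Aux

/-- If `p, r ∈ (0,∞)` and `V ∈ 𝒜_p(ℝⁿ;𝓛(X))` with constant `C`, then
`ρ_{Ł^p(Q,V)}(e) ≤ C ρ_{Ł^r(Q,V)}(e)` for every cube `Q` and every `e ∈ X` (the
right-hand side being interpreted in `[0,∞]`). -/

theorem statement17 {n : ℕ} {X : Type*} [NormedAddCommGroup X] [NormedSpace ℝ X]
    [CompleteSpace X]
    (p r : ℝ) (hp : 0 < p) (hr : 0 < r)
    (V W : (Fin n → ℝ) → X →L[ℝ] X) (C : ℝ≥0) (hAp : IsAp p V W C) :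
    ∀ (c : Fin n → ℝ) (l : ℝ), 0 < l → ∀ e : X,
      rho V (cube c l) p e ≤ (C : ℝ≥0∞) * rho V (cube c l) r e := by
  classical
  intro c l hl e₀
  by_cases he : e₀ = 0
  · have h0 : rho V (cube c l) p 0 = 0 := by
      simp only [rho, map_zero, nnnorm_zero, ENNReal.coe_zero,
        ENNReal.zero_rpow_of_pos hp, laverage, lintegral_zero]
      exact ENNReal.zero_rpow_of_pos (by positivity)
    rw [he, h0]
    exact zero_le
  set Q : Set (Fin n → ℝ) := cube c l with hQdef
  have hQ0 : volume Q ≠ 0 := volume_cube_ne_zero c hl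
  have hQtop : volume Q ≠ ⊤ := volume_cube_ne_top c l
  set ν : Measure (Fin n → ℝ) := (volume Q)⁻¹ • volume.restrict Q with hνdef
  have hrho : ∀ (u : ℝ) (e : X),
      rho V Q u e = (∫⁻ x, (‖V x e‖₊ : ℝ≥0∞) ^ u ∂ν) ^ (1 / u) := by
    intro u e
    rw [rho, laverage, Measure.restrict_apply_univ]
  have hrhoD : ∀ (u : ℝ) (e' : X →L[ℝ] ℝ),
      rhoD W Q u e' = (∫⁻ x, (‖e'.comp (W x)‖₊ : ℝ≥0∞) ^ u ∂ν) ^ (1 / u) := by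
    intro u e'
    rw [rhoD, laverage, Measure.restrict_apply_univ]
  have hν1 : ν Set.univ = 1 := by
    rw [hνdef, Measure.smul_apply, Measure.restrict_apply_univ, smul_eq_mul,
      ENNReal.inv_mul_cancel hQ0 hQtop]
  have hae_ν : ∀ {P : (Fin n → ℝ) → Prop},
      (∀ᵐ x ∂(volume.restrict Q), P x) → ∀ᵐ x ∂ν, P x := fun h => Measure.ae_smul_measure h _
  have hinvν : ∀ᵐ x ∂ν, (V x).comp (W x) = ContinuousLinearMap.id ℝ X ∧
      (W x).comp (V x) = ContinuousLinearMap.id ℝ X :=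
    hae_ν (ae_restrict_of_ae hAp.1.inv)
  have hgmeas : Measurable fun x => (‖V x e₀‖₊ : ℝ≥0∞) :=
    (hAp.1.meas e₀).nnnorm.measurable.coe_nnreal_ennreal
  have hWVe : ∀ {x : (Fin n → ℝ)},
      (W x).comp (V x) = ContinuousLinearMap.id ℝ X → ∀ e : X, W x (V x e) = e := by
    intro x hx e
    have := DFunLike.congr_fun hx e
    simpa using this
  rcases le_or_gt p 1 with hp1 | hp1
  · -- case p ≤ 1: pointwise estimate plus averaging
    have key : ∀ᵐ y ∂ν, rho V Q p e₀ ≤ (C : ℝ≥0∞) * (‖V y e₀‖₊ : ℝ≥0∞) := by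
      have hA := hAp.2.2.2 hp1 c l hl
      obtain ⟨t, htc, hts⟩ := (hAp.1.meas e₀).isSeparable_range
      have haeb : ∀ᵐ y ∂ν, ∀ d ∈ t, rho V Q p (W y d) ≤ (C : ℝ≥0∞) * ‖d‖₊ :=
        (ae_ball_iff htc).2 fun d _ => hae_ν (hA d)
      filter_upwards [haeb, hinvν] with y hy1 hy2
      have hVy : V y e₀ ∈ closure t := hts ⟨y, rfl⟩
      obtain ⟨d, hd_mem, hd_lim⟩ := mem_closure_iff_seq_limit.1 hVy
      have hWd : Filter.Tendsto (fun k => W y (d k)) Filter.atTop (nhds e₀) := by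
        have h2 := ((W y).continuous.tendsto _).comp hd_lim
        rwa [hWVe hy2.2 e₀] at h2
      have hL : ∫⁻ x, (‖V x e₀‖₊ : ℝ≥0∞) ^ p ∂ν ≤
          ((C : ℝ≥0∞) * ‖V y e₀‖₊) ^ p := by
        refine (fatou_aux V hAp.1.meas ν p hWd).trans ?_
        have hk : ∀ k, ∫⁻ x, (‖V x (W y (d k))‖₊ : ℝ≥0∞) ^ p ∂ν ≤
            ((C : ℝ≥0∞) * ‖d k‖₊) ^ p := by
          intro k
          have h2 := hy1 (d k) (hd_mem k)
          rw [hrho] at h2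
          calc ∫⁻ x, (‖V x (W y (d k))‖₊ : ℝ≥0∞) ^ p ∂ν
              = ((∫⁻ x, (‖V x (W y (d k))‖₊ : ℝ≥0∞) ^ p ∂ν) ^ (1 / p)) ^ p := by
                rw [← ENNReal.rpow_mul, one_div, inv_mul_cancel₀ hp.ne', ENNReal.rpow_one]
            _ ≤ ((C : ℝ≥0∞) * ‖d k‖₊) ^ p := ENNReal.rpow_le_rpow h2 hp.le
        refine (Filter.liminf_le_liminf (Filter.Eventually.of_forall hk)).trans ?_
        have htend : Filter.Tendsto (fun k => ((C : ℝ≥0∞) * ‖d k‖₊) ^ p) Filter.atTop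
            (nhds (((C : ℝ≥0∞) * ‖V y e₀‖₊) ^ p)) := by
          refine (ENNReal.continuous_rpow_const.tendsto _).comp ?_
          refine ENNReal.Tendsto.const_mul ?_ (Or.inr ENNReal.coe_ne_top)
          exact ((ENNReal.continuous_coe.comp continuous_nnnorm).tendsto _).comp hd_lim
        exact le_of_eq htend.liminf_eq
      rw [hrho]
      calc (∫⁻ x, (‖V x e₀‖₊ : ℝ≥0∞) ^ p ∂ν) ^ (1 / p)
          ≤ (((C : ℝ≥0∞) * ‖V y e₀‖₊) ^ p) ^ (1 / p) :=
            ENNReal.rpow_le_rpow hL (by positivity)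
        _ = (C : ℝ≥0∞) * ‖V y e₀‖₊ := by
            rw [← ENNReal.rpow_mul, mul_one_div_cancel hp.ne', ENNReal.rpow_one]
    -- averaging step
    have hgoal : rho V Q p e₀ ≤ (C : ℝ≥0∞) * rho V Q r e₀ := by
      set B := rho V Q p e₀ with hBdef
      have h3 : B ^ r ≤ (C : ℝ≥0∞) ^ r * ∫⁻ y, (‖V y e₀‖₊ : ℝ≥0∞) ^ r ∂ν := by
        calc B ^ r = ∫⁻ _, B ^ r ∂ν := by rw [lintegral_const, hν1, mul_one]
          _ ≤ ∫⁻ y, ((C : ℝ≥0∞) * ‖V y e₀‖₊) ^ r ∂ν :=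
              lintegral_mono_ae (key.mono fun y hy => ENNReal.rpow_le_rpow hy hr.le)
          _ = ∫⁻ y, (C : ℝ≥0∞) ^ r * (‖V y e₀‖₊ : ℝ≥0∞) ^ r ∂ν := by
              simp_rw [ENNReal.mul_rpow_of_nonneg _ _ hr.le]
          _ = (C : ℝ≥0∞) ^ r * ∫⁻ y, (‖V y e₀‖₊ : ℝ≥0∞) ^ r ∂ν :=
              lintegral_const_mul' _ _ (ENNReal.rpow_ne_top_of_nonneg hr.le ENNReal.coe_ne_top)
      calc B = (B ^ r) ^ (1 / r) := by
            rw [← ENNReal.rpow_mul, mul_one_div_cancel hr.ne', ENNReal.rpow_one]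
        _ ≤ ((C : ℝ≥0∞) ^ r * ∫⁻ y, (‖V y e₀‖₊ : ℝ≥0∞) ^ r ∂ν) ^ (1 / r) :=
            ENNReal.rpow_le_rpow h3 (by positivity)
        _ = (C : ℝ≥0∞) * (∫⁻ y, (‖V y e₀‖₊ : ℝ≥0∞) ^ r ∂ν) ^ (1 / r) := by
            rw [ENNReal.mul_rpow_of_nonneg _ _ (by positivity : (0:ℝ) ≤ 1 / r),
              ← ENNReal.rpow_mul, mul_one_div_cancel hr.ne', ENNReal.rpow_one]
        _ = (C : ℝ≥0∞) * rho V Q r e₀ := by rw [hrho]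
    exact hgoal
  · -- case 1 < p: duality
    obtain ⟨hDw, hDineq⟩ := hAp.2.2.1 hp1
    set q := conjExp p with hqdef
    have hp1' : 0 < p - 1 := by linarith
    have hq0 : 0 < q := div_pos hp hp1'
    have hq1 : 1 < q := (one_lt_div hp1').2 (by linarith)
    have hRfin : ∀ f : X, rho V Q p f ≠ ⊤ := fun f => hAp.2.1 c l hl f
    have hmeasE : ∀ e : X, AEMeasurable (fun x => (‖V x e‖₊ : ℝ≥0∞)) ν :=
      fun e => ((hAp.1.meas e).nnnorm.measurable.coe_nnreal_ennreal).aemeasurable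
    have hrho0 : rho V Q p (0 : X) = 0 := by
      rw [hrho]
      simp only [map_zero, nnnorm_zero, ENNReal.coe_zero, ENNReal.zero_rpow_of_pos hp,
        lintegral_zero]
      exact ENNReal.zero_rpow_of_pos (by positivity)
    have hint_add : ∀ f g : X, rho V Q p (f + g) ≤ rho V Q p f + rho V Q p g := by
      intro f g
      rw [hrho, hrho, hrho]
      refine le_trans ?_ (ENNReal.lintegral_Lp_add_le (hmeasE f) (hmeasE g) hp1.le)
      refine ENNReal.rpow_le_rpow (lintegral_mono fun x => ?_) (by positivity)
      refine ENNReal.rpow_le_rpow ?_ hp.le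
      calc ((‖V x (f + g)‖₊ : ℝ≥0∞)) = ((‖V x f + V x g‖₊ : ℝ≥0∞)) := by rw [map_add]
        _ ≤ ((‖V x f‖₊ + ‖V x g‖₊ : ℝ≥0) : ℝ≥0∞) :=
            ENNReal.coe_le_coe.2 (nnnorm_add_le _ _)
        _ = _ := ENNReal.coe_add _ _
    have hint_smul : ∀ (a : ℝ) (f : X),
        rho V Q p (a • f) = (‖a‖₊ : ℝ≥0∞) * rho V Q p f := by
      intro a f
      rw [hrho, hrho]
      have hptw : ∀ x, (‖V x (a • f)‖₊ : ℝ≥0∞) ^ p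
          = (‖a‖₊ : ℝ≥0∞) ^ p * (‖V x f‖₊ : ℝ≥0∞) ^ p := by
        intro x
        rw [ContinuousLinearMap.map_smul, nnnorm_smul, ENNReal.coe_mul, ENNReal.mul_rpow_of_nonneg _ _ hp.le]
      simp_rw [hptw]
      rw [lintegral_const_mul' _ _ (ENNReal.rpow_ne_top_of_nonneg hp.le ENNReal.coe_ne_top),
        ENNReal.mul_rpow_of_nonneg _ _ (by positivity : (0:ℝ) ≤ 1 / p),
        ← ENNReal.rpow_mul, mul_one_div_cancel hp.ne', ENNReal.rpow_one]
    set N : Seminorm ℝ X :=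
      { toFun := fun f => (rho V Q p f).toReal
        map_zero' := by
          show (rho V Q p (0:X)).toReal = 0
          rw [hrho0, ENNReal.toReal_zero]
        add_le' := fun f g => by
          show (rho V Q p (f + g)).toReal ≤ (rho V Q p f).toReal + (rho V Q p g).toReal
          refine le_trans (ENNReal.toReal_mono ?_ (hint_add f g)) ?_
          · exact ENNReal.add_ne_top.2 ⟨hRfin f, hRfin g⟩
          · rw [ENNReal.toReal_add (hRfin f) (hRfin g)]
        neg' := fun f => by
          show (rho V Q p (-f)).toReal = (rho V Q p f).toReal
          have h := hint_smul (-1) f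
          rw [neg_one_smul] at h
          rw [h]
          norm_num
        smul' := fun a f => by
          show (rho V Q p (a • f)).toReal = ‖a‖ * (rho V Q p f).toReal
          rw [hint_smul, ENNReal.toReal_mul, ENNReal.coe_toReal, coe_nnnorm] } with hNdef
    have hNapp : ∀ f : X, N f = (rho V Q p f).toReal := fun f => rfl
    have hNlsc : LowerSemicontinuous fun f : X => (rho V Q p f).toReal := by
      intro f y hy
      rcases lt_or_ge y 0 with hneg | hpos
      · exact Filter.Eventually.of_forall fun g => lt_of_lt_of_le hneg ENNReal.toReal_nonneg
      · have h1 : ENNReal.ofReal y < rho V Q p f :=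
          (ENNReal.ofReal_lt_iff_lt_toReal hpos (hRfin f)).2 hy
        have h2 : ∀ᶠ g in nhds f, ENNReal.ofReal y < rho V Q p g := by
          by_contra hcon
          have hfreq : ∃ᶠ g in nhds f, rho V Q p g ≤ ENNReal.ofReal y := by
            simpa [not_lt] using Filter.not_eventually.1 hcon
          have hex : ∀ k : ℕ, ∃ g, g ∈ Metric.ball f (1 / (k + 1)) ∧
              rho V Q p g ≤ ENNReal.ofReal y :=
            fun k => Filter.frequently_iff.1 hfreq (Metric.ball_mem_nhds f (by positivity))
          choose g hg1 hg2 using hex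
          have hgt : Filter.Tendsto g Filter.atTop (nhds f) := by
            refine tendsto_iff_dist_tendsto_zero.2 ?_
            refine squeeze_zero (fun k => dist_nonneg)
              (fun k => (Metric.mem_ball.1 (hg1 k)).le) ?_
            exact tendsto_one_div_add_atTop_nhds_zero_nat
          have hFat := fatou_aux V hAp.1.meas ν p hgt
          have hbd : ∀ k, ∫⁻ x, (‖V x (g k)‖₊ : ℝ≥0∞) ^ p ∂ν ≤ ENNReal.ofReal y ^ p := by
            intro k
            have h3 := hg2 k
            rw [hrho] at h3
            calc ∫⁻ x, (‖V x (g k)‖₊ : ℝ≥0∞) ^ p ∂ν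
                = ((∫⁻ x, (‖V x (g k)‖₊ : ℝ≥0∞) ^ p ∂ν) ^ (1 / p)) ^ p := by
                  rw [← ENNReal.rpow_mul, one_div, inv_mul_cancel₀ hp.ne', ENNReal.rpow_one]
              _ ≤ _ := ENNReal.rpow_le_rpow h3 hp.le
          have h4 : ∫⁻ x, (‖V x f‖₊ : ℝ≥0∞) ^ p ∂ν ≤ ENNReal.ofReal y ^ p :=
            hFat.trans ((Filter.liminf_le_liminf (Filter.Eventually.of_forall hbd)).trans
              (by rw [Filter.liminf_const]))
          have h5 : rho V Q p f ≤ ENNReal.ofReal y := by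
            rw [hrho]
            calc (∫⁻ x, (‖V x f‖₊ : ℝ≥0∞) ^ p ∂ν) ^ (1 / p)
                ≤ (ENNReal.ofReal y ^ p) ^ (1 / p) := ENNReal.rpow_le_rpow h4 (by positivity)
              _ = ENNReal.ofReal y := by
                  rw [← ENNReal.rpow_mul, mul_one_div_cancel hp.ne', ENNReal.rpow_one]
          exact absurd h1 (not_lt.2 h5)
        filter_upwards [h2] with g hg
        exact (ENNReal.ofReal_lt_iff_lt_toReal hpos (hRfin g)).1 hg
    have hNcont : Continuous N := N.continuous_of_lowerSemicontinuous hNlsc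
    obtain ⟨M, hM0, hM⟩ := N.bound_of_continuous_normedSpace hNcont
    -- Hahn–Banach
    obtain ⟨g, hg_eq, hg_le⟩ :=
      exists_extension_of_le_sublinear (LinearPMap.mkSpanSingleton e₀ (N e₀) he) N
        (fun a ha x => by
          rw [map_smul_eq_mul, Real.norm_eq_abs, abs_of_pos ha])
        (fun x y => map_add_le_add N x y)
        (by
          rintro ⟨xv, hxv⟩
          obtain ⟨a, ha⟩ := Submodule.mem_span_singleton.1 hxv
          induction ha
          rw [LinearPMap.mkSpanSingleton'_apply, smul_eq_mul]
          calc a * N e₀ ≤ |a| * N e₀ :=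
                mul_le_mul_of_nonneg_right (le_abs_self a) (apply_nonneg N e₀)
            _ = N (a • e₀) := by rw [map_smul_eq_mul, Real.norm_eq_abs])
    have hgabs : ∀ x : X, |g x| ≤ N x := by
      intro x
      refine abs_le.2 ⟨?_, hg_le x⟩
      have h1 := hg_le (-x)
      rw [map_neg] at h1
      have h2 : N (-x) = N x := map_neg_eq_map N x
      linarith
    set e' : X →L[ℝ] ℝ :=
      LinearMap.mkContinuous g M (fun x => by
        rw [Real.norm_eq_abs]
        exact le_trans (hgabs x) (hM x)) with he'def
    have he'app : ∀ x : X, e' x = g x := fun x => rfl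
    have he'e₀ : e' e₀ = (rho V Q p e₀).toReal := by
      rw [he'app]
      have h1 := hg_eq ⟨e₀, Submodule.mem_span_singleton_self e₀⟩
      rw [h1, LinearPMap.mkSpanSingleton_apply ℝ ℝ he (N e₀)]
      rfl
    have hdual : dualNorm (rho V Q p) e' ≤ 1 := by
      rw [dualNorm]
      refine iSup_le fun e => iSup_le fun _ => ?_
      refine ENNReal.div_le_of_le_mul ?_
      rw [one_mul]
      calc ((‖e' e‖₊ : ℝ≥0∞)) = ENNReal.ofReal ‖e' e‖ := (ofReal_norm _).symm
        _ ≤ ENNReal.ofReal (rho V Q p e).toReal := by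
            refine ENNReal.ofReal_le_ofReal ?_
            rw [Real.norm_eq_abs, he'app]
            exact hgabs e
        _ = rho V Q p e := ENNReal.ofReal_toReal (hRfin e)
    have hDle : rhoD W Q q e' ≤ (C : ℝ≥0∞) := by
      refine le_trans (hDineq c l hl e') ?_
      calc (C : ℝ≥0∞) * dualNorm (rho V Q p) e' ≤ (C : ℝ≥0∞) * 1 :=
            mul_le_mul_right hdual _
        _ = (C : ℝ≥0∞) := mul_one _
    -- Hölder
    set A : ℝ≥0∞ := (‖e' e₀‖₊ : ℝ≥0∞) with hAdef
    have hA : A = rho V Q p e₀ := by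
      rw [hAdef, ← enorm_eq_nnnorm, ← ofReal_norm, Real.norm_eq_abs, he'e₀,
        abs_of_nonneg ENNReal.toReal_nonneg, ENNReal.ofReal_toReal (hRfin e₀)]
    have hV0 : ∀ᵐ x ∂ν, (‖V x e₀‖₊ : ℝ≥0∞) ≠ 0 := by
      filter_upwards [hinvν] with x hx
      have hVx : V x e₀ ≠ 0 := by
        intro hc
        apply he
        have := hWVe hx.2 e₀
        rw [hc, map_zero] at this
        exact this.symm
      simp [hVx]
    set φ : (Fin n → ℝ) → ℝ≥0∞ := fun x => A / (‖V x e₀‖₊ : ℝ≥0∞) with hφdef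
    have hφmeas : AEMeasurable φ ν := (measurable_const.div hgmeas).aemeasurable
    have hφle : ∀ᵐ x ∂ν, φ x ≤ (‖e'.comp (W x)‖₊ : ℝ≥0∞) := by
      filter_upwards [hinvν, hV0] with x hx hx0
      rw [hφdef]
      rw [ENNReal.div_le_iff hx0 ENNReal.coe_ne_top]
      calc A = ENNReal.ofReal ‖e' (W x (V x e₀))‖ := by
            rw [hWVe hx.2 e₀, hAdef, ofReal_norm, enorm_eq_nnnorm]
        _ ≤ ENNReal.ofReal (‖e'.comp (W x)‖ * ‖V x e₀‖) := by
            refine ENNReal.ofReal_le_ofReal ?_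
            exact (e'.comp (W x)).le_opNorm (V x e₀)
        _ = ENNReal.ofReal ‖e'.comp (W x)‖ * ENNReal.ofReal ‖V x e₀‖ :=
            ENNReal.ofReal_mul (norm_nonneg _)
        _ = (‖e'.comp (W x)‖₊ : ℝ≥0∞) * (‖V x e₀‖₊ : ℝ≥0∞) := by
            rw [ofReal_norm, ofReal_norm, enorm_eq_nnnorm, enorm_eq_nnnorm]
    have hprod : ∀ᵐ x ∂ν, φ x * (‖V x e₀‖₊ : ℝ≥0∞) = A := by
      filter_upwards [hV0] with x hx0
      rw [hφdef]
      exact ENNReal.div_mul_cancel hx0 ENNReal.coe_ne_top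
    set u : ℝ := (1 / q + 1 / r)⁻¹ with hudef
    have hu : 1 / u = 1 / q + 1 / r := by rw [hudef, one_div, inv_inv]
    have hu0 : 0 < u := by
      rw [hudef]
      have h1 : 0 < 1 / q := by positivity
      have h2 : 0 < 1 / r := by positivity
      positivity
    have huq : u < q := by
      have h2 : 0 < 1 / r := by positivity
      have h3 : 1 / q < 1 / u := by rw [hu]; linarith
      exact lt_of_one_div_lt_one_div hq0 h3
    have hHolder := ENNReal.lintegral_Lp_mul_le_Lq_mul_Lr hu0 huq hu ν hφmeas
      (hmeasE e₀)
    calc rho V Q p e₀ = A := hA.symm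
      _ = (∫⁻ x, ((φ * fun x => (‖V x e₀‖₊ : ℝ≥0∞)) x) ^ u ∂ν) ^ (1 / u) := by
          have hcongr : ∫⁻ x, ((φ * fun x => (‖V x e₀‖₊ : ℝ≥0∞)) x) ^ u ∂ν
              = ∫⁻ _, A ^ u ∂ν := by
            refine lintegral_congr_ae ?_
            filter_upwards [hprod] with x hx
            rw [Pi.mul_apply, hx]
          rw [hcongr, lintegral_const, hν1, mul_one, ← ENNReal.rpow_mul,
            mul_one_div_cancel hu0.ne', ENNReal.rpow_one]
      _ ≤ (∫⁻ x, φ x ^ q ∂ν) ^ (1 / q) * (∫⁻ x, (‖V x e₀‖₊ : ℝ≥0∞) ^ r ∂ν) ^ (1 / r) :=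
          hHolder
      _ ≤ rhoD W Q q e' * rho V Q r e₀ := by
          refine mul_le_mul' ?_ ?_
          · rw [hrhoD]
            refine ENNReal.rpow_le_rpow ?_ (by positivity)
            refine lintegral_mono_ae ?_
            filter_upwards [hφle] with x hx
            exact ENNReal.rpow_le_rpow hx hq0.le
          · rw [hrho]
      _ ≤ (C : ℝ≥0∞) * rho V Q r e₀ := mul_le_mul_left hDle _


end OpWeight

end
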